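/- arXiv:1608.05401 — 6 statements merged into one kernel-verified Lean document; each statement's English description precedes it below -/
import Mathlib

section
/- Let {α_k} be a non-increasing sequence of non-negative reals converging to 0, and 0 < ν < 1. Then lim_{k→∞} ∑_{i=0}^k α_i ν^{k-i} = 0. -/
/-! Reversing the order of summation, the convolution at time `k` is `∑ⱼ a (k - j) * b j` over
`j ≤ k`. Each term tends to `0` as `k → ∞`, and all terms are dominated by `C * ‖b j‖` with `C` a
bound of the convergent sequence `a`, so Tannery's theorem lets the limit pass through the sum. -/

open Filter Finset Topology

theorem Finset.sum_range_succ_mul_sub_comm {R : Type*} [NonUnitalNonAssocSemiring R]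
    (a b : ℕ → R) (k : ℕ) :
    ∑ i ∈ range (k + 1), a i * b (k - i) = ∑ j ∈ range (k + 1), a (k - j) * b j := by
  rw [← Nat.sum_antidiagonal_eq_sum_range_succ (fun i j => a i * b j), ← Nat.sum_antidiagonal_swap,
    ← Nat.sum_antidiagonal_eq_sum_range_succ (fun j i => a i * b j)]
  rfl

theorem tendsto_sum_range_mul_sub_of_tendsto_zero {R : Type*} [NormedRing R] [CompleteSpace R]
    {a b : ℕ → R} (ha : Tendsto a atTop (𝓝 0)) (hb : Summable (‖b ·‖)) :
    Tendsto (fun k => ∑ i ∈ range (k + 1), a i * b (k - i)) atTop (𝓝 0) := by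
  obtain ⟨C, hC⟩ := ha.norm.bddAbove_range
  have hbound (n : ℕ) : ‖a n‖ ≤ C := hC ⟨n, rfl⟩
  set f : ℕ → ℕ → R := fun k j => if j ≤ k then a (k - j) * b j else 0
  have hf_sum (k : ℕ) : ∑ i ∈ range (k + 1), a i * b (k - i) = ∑' j, f k j := by
    rw [sum_range_succ_mul_sub_comm, tsum_eq_sum (s := range (k + 1))]
    · refine sum_congr rfl fun j hj => ?_
      simp [f, Nat.le_of_lt_succ (mem_range.mp hj)]
    · intro j hj
      simp [f, Nat.lt_succ_iff.not.mp (mem_range.not.mp hj)]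
  have hf_lim (j : ℕ) : Tendsto (f · j) atTop (𝓝 0) := by
    have : Tendsto (fun k => a (k - j) * b j) atTop (𝓝 0) := by
      simpa using (ha.comp (tendsto_sub_atTop_nat j)).mul_const (b j)
    refine this.congr' ?_
    filter_upwards [eventually_ge_atTop j] with k hk
    simp [f, hk]
  have hf_bound (k j : ℕ) : ‖f k j‖ ≤ C * ‖b j‖ := by
    by_cases hjk : j ≤ k
    · simp only [f, if_pos hjk]
      exact (norm_mul_le _ _).trans (mul_le_mul_of_nonneg_right (hbound _) (norm_nonneg _))
    · simp only [f, if_neg hjk, norm_zero]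
      exact mul_nonneg ((norm_nonneg _).trans (hbound 0)) (norm_nonneg _)
  simpa [hf_sum] using tendsto_tsum_of_dominated_convergence (hb.mul_left C) hf_lim
    (Eventually.of_forall hf_bound)

theorem stmt_2_general (α : ℕ → ℝ)
    (hlim : Filter.Tendsto α Filter.atTop (nhds 0))
    (ν : ℝ) (hν0 : 0 < ν) (hν1 : ν < 1) :
    Filter.Tendsto (fun k => ∑ i ∈ Finset.range (k + 1), α i * ν ^ (k - i))
      Filter.atTop (nhds 0) := by
  have hν : ‖ν‖ < 1 := by
    rw [Real.norm_eq_abs, abs_lt]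
    constructor <;> linarith
  exact tendsto_sum_range_mul_sub_of_tendsto_zero hlim (summable_norm_geometric_of_norm_lt_one hν)

theorem stmt_2 (α : ℕ → ℝ) (hnn : ∀ k, 0 ≤ α k) (hmono : ∀ k, α (k + 1) ≤ α k)
    (hlim : Filter.Tendsto α Filter.atTop (nhds 0))
    (ν : ℝ) (hν0 : 0 < ν) (hν1 : ν < 1) :
    Filter.Tendsto (fun k => ∑ i ∈ Finset.range (k + 1), α i * ν ^ (k - i))
      Filter.atTop (nhds 0) :=
  stmt_2_general α hlim ν hν0 hν1
end

section
/- Let a : ℕ → ℝ be a non-negative sequence with a_{k+1} ≤ ν a_k + α_k L, where 0 < ν < 1, L ≥ 0, and {α_k} is a non-increasing sequence of non-negative reals with α_k → 0. Then a_k → 0. -/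
open Filter Topology

/-!
Once the perturbation `α k * L` stays below `(1 - ν) δ`, the excess `a k - δ` contracts by the
factor `ν` at each step, so `a` is eventually below `2 δ`, for every `δ > 0`.
-/

theorem sub_le_pow_mul_sub_of_succ_le {u : ℕ → ℝ} {ν δ : ℝ} (hν : 0 ≤ ν)
    (hu : ∀ m, u (m + 1) ≤ ν * u m + (1 - ν) * δ) (m : ℕ) :
    u m - δ ≤ ν ^ m * (u 0 - δ) := by
  induction m with
  | zero => simp
  | succ m ih =>
    calc u (m + 1) - δ ≤ ν * (u m - δ) := by linarith [hu m]
      _ ≤ ν * (ν ^ m * (u 0 - δ)) := mul_le_mul_of_nonneg_left ih hν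
      _ = ν ^ (m + 1) * (u 0 - δ) := by ring

theorem tendsto_zero_of_succ_le_mul_add {a b : ℕ → ℝ} {ν : ℝ} (ha : ∀ k, 0 ≤ a k)
    (hν0 : 0 ≤ ν) (hν1 : ν < 1) (hb : Tendsto b atTop (𝓝 0))
    (hrec : ∀ k, a (k + 1) ≤ ν * a k + b k) :
    Tendsto a atTop (𝓝 0) := by
  refine tendsto_order.2 ⟨fun c hc => .of_forall fun k => hc.trans_le (ha k), fun ε hε => ?_⟩
  obtain ⟨N, hN⟩ := eventually_atTop.1 <|
    hb.eventually (ge_mem_nhds (by positivity : 0 < (1 - ν) * (ε / 2)))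
  have hstep : ∀ m, a (m + 1 + N) ≤ ν * a (m + N) + (1 - ν) * (ε / 2) := fun m => by
    rw [Nat.add_right_comm]
    exact (hrec (m + N)).trans (add_le_add_right (hN (m + N) (Nat.le_add_left N m)) _)
  have hbound (m : ℕ) : a (m + N) - ε / 2 ≤ ν ^ m * (a N - ε / 2) := by
    simpa using sub_le_pow_mul_sub_of_succ_le (u := fun m => a (m + N)) hν0 hstep m
  have hpow : Tendsto (fun k => ν ^ (k - N) * (a N - ε / 2)) atTop (𝓝 0) := by
    simpa using ((tendsto_pow_atTop_nhds_zero_of_lt_one hν0 hν1).comp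
      (tendsto_sub_atTop_nat N)).mul_const (a N - ε / 2)
  filter_upwards [hpow.eventually (gt_mem_nhds (half_pos hε)), eventually_ge_atTop N]
    with k hk hkN
  have hk_bound := hbound (k - N)
  rw [Nat.sub_add_cancel hkN] at hk_bound
  linarith

theorem stmt_4_general (a α : ℕ → ℝ) (ha : ∀ k, 0 ≤ a k)
    (hαlim : Filter.Tendsto α Filter.atTop (nhds 0))
    (ν L : ℝ) (hν0 : 0 < ν) (hν1 : ν < 1)
    (hrec : ∀ k, a (k + 1) ≤ ν * a k + α k * L) :
    Filter.Tendsto a Filter.atTop (nhds 0) :=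
  tendsto_zero_of_succ_le_mul_add ha hν0.le hν1 (by simpa using hαlim.mul_const L) hrec

theorem stmt_4 (a α : ℕ → ℝ) (ha : ∀ k, 0 ≤ a k) (hα : ∀ k, 0 ≤ α k)
    (hαmono : ∀ k, α (k + 1) ≤ α k)
    (hαlim : Filter.Tendsto α Filter.atTop (nhds 0))
    (ν L : ℝ) (hν0 : 0 < ν) (hν1 : ν < 1) (hL : 0 ≤ L)
    (hrec : ∀ k, a (k + 1) ≤ ν * a k + α k * L) :
    Filter.Tendsto a Filter.atTop (nhds 0) :=
  stmt_4_general a α ha hαlim ν L hν0 hν1 hrec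
end

section
/- Let (u_k), (v_k), (w_k), (γ_k) be non-negative real sequences with ∑ γ_k < ∞, ∑ w_k < ∞, and u_{k+1} ≤ (1+γ_k)·u_k − v_k + w_k for all k. Then (u_k) converges to a non-negative real limit and ∑ v_k < ∞. -/
/-!
Dividing the recursion by the partial products `P k = ∏_{j<k} (1 + γ j)`, which increase to a
finite limit because `∑ γ` converges, removes the factor `1 + γ k`. In the normalized recursion
`u (k+1) ≤ u k - v k + w k`, the sequence `u k - ∑_{j<k} w j` is non-increasing and bounded below,
and telescoping bounds the partial sums of `v`.
-/

open Finset Filter Topology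

section

variable {u v w : ℕ → ℝ}

theorem add_sum_range_le_add_sum_range_of_le_sub_add (hrec : ∀ k, u (k + 1) ≤ u k - v k + w k)
    (n : ℕ) : u n + ∑ j ∈ range n, v j ≤ u 0 + ∑ j ∈ range n, w j := by
  induction n with
  | zero => simp
  | succ n ih =>
    rw [sum_range_succ, sum_range_succ]
    linarith [hrec n]

theorem tendsto_and_summable_of_le_sub_add (hu : ∀ k, 0 ≤ u k) (hv : ∀ k, 0 ≤ v k)
    (hws : Summable w) (hrec : ∀ k, u (k + 1) ≤ u k - v k + w k) :
    (∃ l, Tendsto u atTop (𝓝 l)) ∧ Summable v := by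
  have hW := hws.hasSum.tendsto_sum_nat
  obtain ⟨B, hB⟩ := hW.bddAbove_range
  have hWB : ∀ n, ∑ j ∈ range n, w j ≤ B := fun n => hB ⟨n, rfl⟩
  set z : ℕ → ℝ := fun n => u n - ∑ j ∈ range n, w j
  have hz_anti : Antitone z := antitone_nat_of_succ_le fun k => by
    simp only [z, sum_range_succ]
    linarith [hrec k, hv k]
  have hz_bdd : BddBelow (Set.range z) :=
    ⟨-B, by rintro _ ⟨n, rfl⟩; linarith [hu n, hWB n]⟩
  refine ⟨⟨_, ((tendsto_atTop_ciInf hz_anti hz_bdd).add hW).congr fun n => ?_⟩, ?_⟩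
  · simp [z]
  · refine summable_of_sum_range_le hv (c := u 0 + B) fun n => ?_
    linarith [add_sum_range_le_add_sum_range_of_le_sub_add hrec n, hu n, hWB n]

end

theorem tendsto_and_summable_of_le_one_add_mul_sub_add {u v w γ : ℕ → ℝ}
    (hu : ∀ k, 0 ≤ u k) (hv : ∀ k, 0 ≤ v k) (hγ : ∀ k, 0 ≤ γ k)
    (hγs : Summable γ) (hws : Summable w)
    (hrec : ∀ k, u (k + 1) ≤ (1 + γ k) * u k - v k + w k) :
    (∃ l, Tendsto u atTop (𝓝 l)) ∧ Summable v := by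
  set P : ℕ → ℝ := fun k => ∏ j ∈ range k, (1 + γ j)
  have hP_one : ∀ k, 1 ≤ P k := fun k => one_le_prod fun j _ => by linarith [hγ j]
  have hP_pos : ∀ k, 0 < P k := fun k => one_pos.trans_le (hP_one k)
  have hP_lim : Tendsto P atTop (𝓝 (∏' j, (1 + γ j))) :=
    (Real.multipliable_one_add_of_summable hγs).tendsto_prod_tprod_nat
  obtain ⟨C, hC⟩ := hP_lim.bddAbove_range
  have hrec_div : ∀ k, u (k + 1) / P (k + 1) ≤
      u k / P k - v k / P (k + 1) + w k / P (k + 1) := fun k => by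
    have hP_succ : P (k + 1) = P k * (1 + γ k) := prod_range_succ _ k
    calc u (k + 1) / P (k + 1) ≤ ((1 + γ k) * u k - v k + w k) / P (k + 1) :=
          div_le_div_of_nonneg_right (hrec k) (hP_pos _).le
      _ = u k / P k - v k / P (k + 1) + w k / P (k + 1) := by
          rw [hP_succ]
          field_simp [(hP_pos k).ne', show 1 + γ k ≠ 0 by linarith [hγ k]]
  have hws_div : Summable fun k => w k / P (k + 1) :=
    hws.abs.of_norm_bounded fun k => by
      rw [Real.norm_eq_abs, abs_div, abs_of_pos (hP_pos _)]
      exact div_le_self (abs_nonneg _) (hP_one _)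
  obtain ⟨⟨l, hl⟩, hv_div⟩ := tendsto_and_summable_of_le_sub_add
    (fun k => div_nonneg (hu k) (hP_pos k).le) (fun k => div_nonneg (hv k) (hP_pos _).le)
    hws_div hrec_div
  refine ⟨⟨_, (hl.mul hP_lim).congr fun k => div_mul_cancel₀ _ (hP_pos k).ne'⟩, ?_⟩
  refine (hv_div.mul_right C).of_nonneg_of_le hv fun k => ?_
  calc v k = v k / P (k + 1) * P (k + 1) := (div_mul_cancel₀ _ (hP_pos _).ne').symm
    _ ≤ v k / P (k + 1) * C :=
        mul_le_mul_of_nonneg_left (hC ⟨k + 1, rfl⟩) (div_nonneg (hv k) (hP_pos _).le)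

theorem stmt_5_general (u v w γ : ℕ → ℝ)
    (hu : ∀ k, 0 ≤ u k) (hv : ∀ k, 0 ≤ v k) (hγ : ∀ k, 0 ≤ γ k)
    (hγs : Summable γ) (hws : Summable w)
    (hrec : ∀ k, u (k + 1) ≤ (1 + γ k) * u k - v k + w k) :
    (∃ l : ℝ, 0 ≤ l ∧ Filter.Tendsto u Filter.atTop (nhds l)) ∧ Summable v := by
  obtain ⟨⟨l, hl⟩, hvs⟩ := tendsto_and_summable_of_le_one_add_mul_sub_add hu hv hγ hγs hws hrec
  exact ⟨⟨l, ge_of_tendsto' hl hu, hl⟩, hvs⟩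

theorem stmt_5 (u v w γ : ℕ → ℝ)
    (hu : ∀ k, 0 ≤ u k) (hv : ∀ k, 0 ≤ v k) (hw : ∀ k, 0 ≤ w k) (hγ : ∀ k, 0 ≤ γ k)
    (hγs : Summable γ) (hws : Summable w)
    (hrec : ∀ k, u (k + 1) ≤ (1 + γ k) * u k - v k + w k) :
    (∃ l : ℝ, 0 ≤ l ∧ Filter.Tendsto u Filter.atTop (nhds l)) ∧ Summable v :=
  stmt_5_general u v w γ hu hv hγ hγs hws hrec
end

section
/- Let (u_k), (w_k), (γ_k) be non-negative real sequences and (α_k) a non-negative sequence with ∑ α_k = ∞, ∑ γ_k < ∞, ∑ w_k < ∞, and suppose u_{k+1} ≤ (1+γ_k) u_k − α_k b_k + w_k where b_k ≥ 0. Then liminf_{k→∞} b_k = 0. -/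
/-!
Dividing the recursion by `Q k = ∏_{i<k} (1 + γ i)`, which stays between `1` and `exp (∑ γ)`,
turns it into `α k * b k / exp (∑ γ) ≤ v k - v (k + 1) + w k` for `v k = u k / Q k ≥ 0`.
Telescoping shows that `∑ α k * b k` converges. If `b` were eventually `≥ ε > 0`, then
`α ≤ α * b / ε` eventually and `∑ α` would converge too.
-/

open Filter Finset

theorem summable_of_le_sub_add {a v w : ℕ → ℝ} (ha : ∀ k, 0 ≤ a k) (hv : ∀ k, 0 ≤ v k)
    (hw : ∀ k, 0 ≤ w k) (hws : Summable w) (h : ∀ k, a k ≤ v k - v (k + 1) + w k) :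
    Summable a := by
  refine summable_of_sum_range_le (c := v 0 + ∑' k, w k) ha fun n => ?_
  calc ∑ k ∈ range n, a k ≤ ∑ k ∈ range n, (v k - v (k + 1) + w k) :=
        sum_le_sum fun k _ => h k
    _ = v 0 - v n + ∑ k ∈ range n, w k := by rw [sum_add_distrib, sum_range_sub']
    _ ≤ v 0 + ∑' k, w k := by linarith [hv n, hws.sum_le_tsum (range n) fun k _ => hw k]

theorem summable_of_le_one_add_mul_sub_add {u γ a w : ℕ → ℝ} (hu : ∀ k, 0 ≤ u k)
    (hγ : ∀ k, 0 ≤ γ k) (hγs : Summable γ) (ha : ∀ k, 0 ≤ a k) (hw : ∀ k, 0 ≤ w k)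
    (hws : Summable w) (hrec : ∀ k, u (k + 1) ≤ (1 + γ k) * u k - a k + w k) :
    Summable a := by
  set Q : ℕ → ℝ := fun n => ∏ k ∈ range n, (1 + γ k)
  set E := Real.exp (∑' k, γ k)
  have hQ1 : ∀ n, 1 ≤ Q n := fun n => one_le_prod fun k _ => by linarith [hγ k]
  have hQpos : ∀ n, 0 < Q n := fun n => one_pos.trans_le (hQ1 n)
  have hQE : ∀ n, Q n ≤ E := fun n => (Real.prod_one_add_le_exp_sum _ hγ).trans
    (Real.exp_le_exp.2 (hγs.sum_le_tsum _ fun k _ => hγ k))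
  have hstep : ∀ k, a k / E ≤ u k / Q k - u (k + 1) / Q (k + 1) + w k := by
    intro k
    have hQsucc : Q (k + 1) = Q k * (1 + γ k) := prod_range_succ _ _
    have hnormalized : u (k + 1) / Q (k + 1) ≤ u k / Q k - a k / Q (k + 1) + w k / Q (k + 1) := by
      have hγk : 0 < 1 + γ k := by linarith [hγ k]
      have hQk : Q k ≠ 0 := (hQpos k).ne'
      rw [hQsucc, div_le_iff₀ (mul_pos (hQpos k) hγk)]
      field_simp
      linarith [hrec k]
    have ha_div : a k / E ≤ a k / Q (k + 1) := div_le_div_of_nonneg_left (ha k) (hQpos _) (hQE _)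
    have hw_div : w k / Q (k + 1) ≤ w k := div_le_self (hw k) (hQ1 _)
    linarith
  have hEpos : 0 < E := Real.exp_pos _
  exact (summable_div_const_iff hEpos.ne').1 <| summable_of_le_sub_add
    (fun k => div_nonneg (ha k) hEpos.le) (fun k => div_nonneg (hu k) (hQpos k).le) hw hws hstep

theorem frequently_lt_of_summable_mul {α b : ℕ → ℝ} (hα : ∀ k, 0 ≤ α k)
    (hαdiv : ¬ Summable α) (hαb : Summable fun k => α k * b k) {ε : ℝ} (hε : 0 < ε) :
    ∃ᶠ k in atTop, b k < ε := by
  refine fun hb_ge => hαdiv <| (hαb.div_const ε).of_norm_bounded_eventually_nat ?_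
  filter_upwards [hb_ge] with k hk
  rw [Real.norm_of_nonneg (hα k), le_div_iff₀ hε]
  exact mul_le_mul_of_nonneg_left (not_lt.1 hk) (hα k)

theorem liminf_eq_zero_of_summable_mul {α b : ℕ → ℝ} (hα : ∀ k, 0 ≤ α k) (hb : ∀ k, 0 ≤ b k)
    (hαdiv : ¬ Summable α) (hαb : Summable fun k => α k * b k) :
    liminf b atTop = 0 := by
  have hsmall : ∀ ε > 0, ∃ᶠ k in atTop, b k ≤ ε := fun ε hε =>
    (frequently_lt_of_summable_mul hα hαdiv hαb hε).mono fun _ => le_of_lt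
  refine le_antisymm (le_of_forall_pos_le_add fun ε hε => ?_) ?_
  · rw [zero_add]
    exact liminf_le_of_frequently_le (hsmall ε hε) (isBoundedUnder_of ⟨0, hb⟩)
  · exact le_liminf_of_le (IsCoboundedUnder.of_frequently_le (hsmall 1 one_pos))
      (Eventually.of_forall hb)

theorem stmt_6 (u w γ α b : ℕ → ℝ)
    (hu : ∀ k, 0 ≤ u k) (hw : ∀ k, 0 ≤ w k) (hγ : ∀ k, 0 ≤ γ k)
    (hα : ∀ k, 0 ≤ α k) (hb : ∀ k, 0 ≤ b k)
    (hγs : Summable γ) (hws : Summable w)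
    (hαdiv : ¬ Summable α)
    (hrec : ∀ k, u (k + 1) ≤ (1 + γ k) * u k - α k * b k + w k) :
    Filter.liminf b Filter.atTop = 0 :=
  liminf_eq_zero_of_summable_mul hα hb hαdiv <| summable_of_le_one_add_mul_sub_add hu hγ hγs
    (fun k => mul_nonneg (hα k) (hb k)) hw hws hrec
end

section
/- Let f = ∑_{i=1}^S f_i where each f_i : ℝ^D → ℝ is differentiable with gradient g_i satisfying ‖g_i(x)‖ ≤ L_i, and f is convex. Let v̄, y ∈ ℝ^D and δ_J ∈ ℝ^D with v_J = v̄ + δ_J. Then ∑_J ⟨g_J(v̄), y − v_J⟩ ≤ f(y) − f(v̄) + (∑_J L_J) · max_J ‖δ_J‖. -/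
/-!
Although the `f_i` need not be convex, their sum is, and its gradient at `v̄` is `∑ g_J v̄`;
the gradient inequality for the sum handles the terms `⟨g_J v̄, y - v̄⟩`, and by Cauchy–Schwarz
each perturbation `-⟨g_J v̄, δ_J⟩` costs at most `L_J M`.
-/

open scoped InnerProductSpace

theorem ConvexOn.le_sub_of_hasFDerivAt {E : Type*} [NormedAddCommGroup E] [NormedSpace ℝ E]
    {s : Set E} {F : E → ℝ} {F' : E →L[ℝ] ℝ} {x y : E} (hF : ConvexOn ℝ s F)
    (hx : x ∈ s) (hy : y ∈ s) (hF' : HasFDerivAt F F' x) :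
    F' (y - x) ≤ F y - F x := by
  let ℓ : ℝ →ᵃ[ℝ] E := AffineMap.lineMap x y
  have hℓ0 : ℓ 0 = x := AffineMap.lineMap_apply_zero x y
  have hℓ1 : ℓ 1 = y := AffineMap.lineMap_apply_one x y
  have hline : ConvexOn ℝ (ℓ ⁻¹' s) (F ∘ ℓ) := hF.comp_affineMap ℓ
  have hderiv : HasDerivAt (F ∘ ℓ) (F' (y - x)) 0 := by
    refine HasFDerivAt.comp_hasDerivAt (0 : ℝ) ?_ AffineMap.hasDerivAt_lineMap
    rwa [hℓ0]
  simpa [slope_def_field, hℓ0, hℓ1] using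
    hline.le_slope_of_hasDerivAt (x := 0) (y := 1) (by simpa [hℓ0]) (by simpa [hℓ1])
      zero_lt_one hderiv

theorem ConvexOn.inner_le_sub_of_hasGradientAt {E : Type*} [NormedAddCommGroup E]
    [InnerProductSpace ℝ E] [CompleteSpace E] {s : Set E} {F : E → ℝ} {G x y : E}
    (hF : ConvexOn ℝ s F) (hx : x ∈ s) (hy : y ∈ s) (hG : HasGradientAt F G x) :
    ⟪G, y - x⟫_ℝ ≤ F y - F x :=
  hF.le_sub_of_hasFDerivAt hx hy hG.hasFDerivAt

theorem HasGradientAt.fun_sum {E ι : Type*} [NormedAddCommGroup E] [InnerProductSpace ℝ E]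
    [CompleteSpace E] {t : Finset ι} {f : ι → E → ℝ} {g : ι → E} {x : E}
    (h : ∀ i ∈ t, HasGradientAt (f i) (g i) x) :
    HasGradientAt (fun y => ∑ i ∈ t, f i y) (∑ i ∈ t, g i) x := by
  rw [hasGradientAt_iff_hasFDerivAt, map_sum]
  exact HasFDerivAt.fun_sum fun i hi => (h i hi).hasFDerivAt

theorem neg_real_inner_le_mul {E : Type*} [NormedAddCommGroup E] [InnerProductSpace ℝ E]
    {u v : E} {a b : ℝ} (hu : ‖u‖ ≤ a) (hv : ‖v‖ ≤ b) :
    -⟪u, v⟫_ℝ ≤ a * b :=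
  calc -⟪u, v⟫_ℝ ≤ |⟪u, v⟫_ℝ| := neg_le_abs _
    _ ≤ ‖u‖ * ‖v‖ := abs_real_inner_le_norm u v
    _ ≤ a * b := mul_le_mul hu hv (norm_nonneg v) ((norm_nonneg u).trans hu)

theorem stmt_15 (S D : ℕ) (f : Fin S → EuclideanSpace ℝ (Fin D) → ℝ)
    (g : Fin S → EuclideanSpace ℝ (Fin D) → EuclideanSpace ℝ (Fin D))
    (hg : ∀ i x, HasGradientAt (f i) (g i x) x)
    (L : Fin S → ℝ) (hL : ∀ i x, ‖g i x‖ ≤ L i)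
    (hconv : ConvexOn ℝ Set.univ (fun x => ∑ i, f i x))
    (vbar y : EuclideanSpace ℝ (Fin D)) (δ : Fin S → EuclideanSpace ℝ (Fin D))
    (M : ℝ) (hM : ∀ J, ‖δ J‖ ≤ M) :
    ∑ J, (inner ℝ (g J vbar) (y - (vbar + δ J)) : ℝ)
      ≤ (∑ i, f i y) - (∑ i, f i vbar) + (∑ J, L J) * M := by
  have hgradient : ⟪∑ J, g J vbar, y - vbar⟫_ℝ ≤ (∑ i, f i y) - ∑ i, f i vbar :=
    hconv.inner_le_sub_of_hasGradientAt trivial trivial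
      (HasGradientAt.fun_sum fun i _ => hg i vbar)
  have hsplit : ∀ J, ⟪g J vbar, y - (vbar + δ J)⟫_ℝ
      = ⟪g J vbar, y - vbar⟫_ℝ + -⟪g J vbar, δ J⟫_ℝ := fun J => by rw [sub_add_eq_sub_sub, inner_sub_right, sub_eq_add_neg]
  calc ∑ J, ⟪g J vbar, y - (vbar + δ J)⟫_ℝ
      = ⟪∑ J, g J vbar, y - vbar⟫_ℝ + ∑ J, -⟪g J vbar, δ J⟫_ℝ := by
        simp only [hsplit, Finset.sum_add_distrib, sum_inner]
    _ ≤ (∑ i, f i y) - (∑ i, f i vbar) + ∑ J, L J * M :=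
        add_le_add hgradient
          (Finset.sum_le_sum fun J _ => neg_real_inner_le_mul (hL J vbar) (hM J))
    _ = (∑ i, f i y) - (∑ i, f i vbar) + (∑ J, L J) * M := by rw [Finset.sum_mul]
end

section
/- Let B be an S×S doubly stochastic scrambling matrix with all non-zero entries ≥ η > 0, meaning any two rows have a common column with positive entries. Then for any x : Fin S → ℝ^D, setting v_J = ∑_L B[J,L] x_L, one has max_{I,J} ‖v_J − v_I‖ ≤ ν · max_{P,Q} ‖x_P − x_Q‖ where ν = 1 − η < 1. -/
open Finset

theorem sum_smul_sub_sum_smul_eq {ι R E : Type*} [Fintype ι] [CommRing R] [AddCommGroup E]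
    [Module R E] (a b : ι → R) (x : ι → E) :
    (∑ j, b j) • ∑ i, a i • x i - (∑ i, a i) • ∑ j, b j • x j =
      ∑ i, ∑ j, (a i * b j) • (x i - x j) := by
  simp only [smul_sub, sum_sub_distrib, smul_sum, sum_smul, mul_smul, smul_comm (b _) (a _)]
  rw [sum_comm (f := fun i j => a i • b j • x j)]

theorem norm_sum_smul_sub_sum_smul_le {ι E : Type*} [Fintype ι] [SeminormedAddCommGroup E]
    [NormedSpace ℝ E] {a b : ι → ℝ} (ha : ∀ i, 0 ≤ a i) (hb : ∀ i, 0 ≤ b i)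
    (hab : ∑ i, a i = ∑ i, b i) {x : ι → E} {M : ℝ} (hM : ∀ i j, ‖x i - x j‖ ≤ M) :
    ‖∑ i, a i • x i - ∑ i, b i • x i‖ ≤ (∑ i, a i) * M := by
  rcases (sum_nonneg fun i _ => ha i : 0 ≤ ∑ i, a i).eq_or_lt with ht0 | htpos
  · have ha0 : ∀ i, a i = 0 := fun i =>
      (sum_eq_zero_iff_of_nonneg fun i _ => ha i).1 ht0.symm i (mem_univ i)
    have hb0 : ∀ i, b i = 0 := fun i =>
      (sum_eq_zero_iff_of_nonneg fun i _ => hb i).1 (hab ▸ ht0.symm) i (mem_univ i)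
    simp [ha0, hb0]
  refine le_of_mul_le_mul_left ?_ htpos
  calc (∑ i, a i) * ‖∑ i, a i • x i - ∑ i, b i • x i‖
      = ‖∑ i, ∑ j, (a i * b j) • (x i - x j)‖ := by
        rw [← sum_smul_sub_sum_smul_eq, ← hab, ← smul_sub, norm_smul, Real.norm_of_nonneg htpos.le]
    _ ≤ ∑ i, ∑ j, (a i * b j) * M :=
        norm_sum_le_of_le _ fun i _ => norm_sum_le_of_le _ fun j _ => by
          rw [norm_smul, Real.norm_of_nonneg (mul_nonneg (ha i) (hb j))]
          exact mul_le_mul_of_nonneg_left (hM i j) (mul_nonneg (ha i) (hb j))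
    _ = (∑ i, a i) * ((∑ i, a i) * M) := by
        simp_rw [← sum_mul]
        rw [← sum_mul_sum, ← hab, mul_assoc]

theorem stmt_19_general (S D : ℕ) (B : Matrix (Fin S) (Fin S) ℝ)
    (hnn : ∀ I J, 0 ≤ B I J)
    (hrow : ∀ I, ∑ J, B I J = 1)
    (η : ℝ)
    (hlb : ∀ I J, B I J ≠ 0 → η ≤ B I J)
    (hscr : ∀ I J, ∃ L, 0 < B I L ∧ 0 < B J L)
    (x : Fin S → EuclideanSpace ℝ (Fin D))
    (v : Fin S → EuclideanSpace ℝ (Fin D)) (hv : ∀ J, v J = ∑ L, B J L • x L)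
    (M : ℝ) (hM : ∀ P Q, ‖x P - x Q‖ ≤ M) :
    ∀ I J, ‖v J - v I‖ ≤ (1 - η) * M := by
  intro I J
  obtain ⟨L, hIL, hJL⟩ := hscr I J
  -- The common part `c` of rows `I` and `J` cancels in `v J - v I`; scrambling makes its mass `≥ η`.
  set c : Fin S → ℝ := fun L => min (B I L) (B J L)
  have hdiff : v J - v I = ∑ L, (B J L - c L) • x L - ∑ L, (B I L - c L) • x L := by
    simp only [hv, sub_smul, sum_sub_distrib]
    abel
  have hmass : ∀ K, ∑ L, (B K L - c L) = 1 - ∑ L, c L := fun K => by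
    rw [sum_sub_distrib, hrow]
  have hcommon : η ≤ ∑ L, c L :=
    (le_min (hlb I L hIL.ne') (hlb J L hJL.ne')).trans
      (single_le_sum (fun L _ => le_min (hnn I L) (hnn J L)) (mem_univ L))
  have hM0 : 0 ≤ M := (norm_nonneg _).trans (hM I I)
  calc ‖v J - v I‖ ≤ (∑ L, (B J L - c L)) * M := hdiff ▸
        norm_sum_smul_sub_sum_smul_le (fun L => sub_nonneg.2 (min_le_right _ _))
          (fun L => sub_nonneg.2 (min_le_left _ _)) (by rw [hmass, hmass]) hM
    _ ≤ (1 - η) * M := by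
        rw [hmass]
        exact mul_le_mul_of_nonneg_right (by linarith) hM0

theorem stmt_19 (S D : ℕ) (B : Matrix (Fin S) (Fin S) ℝ)
    (hnn : ∀ I J, 0 ≤ B I J)
    (hrow : ∀ I, ∑ J, B I J = 1) (hcol : ∀ J, ∑ I, B I J = 1)
    (η : ℝ) (hη : 0 < η)
    (hlb : ∀ I J, B I J ≠ 0 → η ≤ B I J)
    (hscr : ∀ I J, ∃ L, 0 < B I L ∧ 0 < B J L)
    (x : Fin S → EuclideanSpace ℝ (Fin D))
    (v : Fin S → EuclideanSpace ℝ (Fin D)) (hv : ∀ J, v J = ∑ L, B J L • x L)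
    (M : ℝ) (hM : ∀ P Q, ‖x P - x Q‖ ≤ M) :
    ∀ I J, ‖v J - v I‖ ≤ (1 - η) * M :=
  stmt_19_general S D B hnn hrow η hlb hscr x v hv M hM
end
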